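/- arXiv:2010.11750 — 6 statements merged into one kernel-verified Lean document; each statement's English description precedes it below -/
import Mathlib

section
/- Let p, n1, n2 be positive reals with n1 + n2 > p, and let α1, α2 be positive reals satisfying α1 + α2 = 1 - p/(n1+n2). Given positive reals λ_1,...,λ_{p/2} (p even), suppose α1 + (1/(n1+n2)) · Σ_{i=1}^{p/2} (λ_i^2 α1/(λ_i^2 α1 + α2) + λ_i^{-2} α1/(λ_i^{-2} α1 + α2)) = n1/(n1+n2). Then α1 > α2 implies n1 > n2. -/
/-- Key claim in the proof of the covariate-shift dichotomy (Proposition 3.2):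
if the fixed-point solution satisfies α1 > α2, then n1 > n2. -/
theorem covariate_shift_dichotomy_key
    (p n1 n2 α1 α2 : ℝ) (k : ℕ) (lam : Fin k → ℝ)
    (hp : 0 < p) (hn1 : 0 < n1) (hn2 : 0 < n2) (hpn : p < n1 + n2)
    (hpk : p = 2 * k)
    (hlam : ∀ i, 0 < lam i)
    (hα1 : 0 < α1) (hα2 : 0 < α2)
    (hsum : α1 + α2 = 1 - p / (n1 + n2))
    (heq : α1 + (1 / (n1 + n2)) *
        ∑ i : Fin k, ((lam i) ^ 2 * α1 / ((lam i) ^ 2 * α1 + α2)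
          + ((lam i)⁻¹) ^ 2 * α1 / (((lam i)⁻¹) ^ 2 * α1 + α2)) = n1 / (n1 + n2))
    (h12 : α1 > α2) : n1 > n2 := by
  have hN : 0 < n1 + n2 := by linarith
  have hterm : ∀ i : Fin k,
      (1 : ℝ) ≤ (lam i) ^ 2 * α1 / ((lam i) ^ 2 * α1 + α2)
        + ((lam i)⁻¹) ^ 2 * α1 / (((lam i)⁻¹) ^ 2 * α1 + α2) := by
    intro i
    have ha : 0 < lam i := hlam i
    have ha2 : 0 < (lam i) ^ 2 := by positivity
    have hinv : ((lam i)⁻¹) ^ 2 = ((lam i) ^ 2)⁻¹ := by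
      rw [inv_pow]
    set s := (lam i) ^ 2 with hs
    set t := s⁻¹ with ht
    have htpos : 0 < t := by positivity
    have hsinv : s * t = 1 := mul_inv_cancel₀ (ne_of_gt ha2)
    clear_value t
    have hd1 : 0 < s * α1 + α2 := by positivity
    have hd2 : 0 < t * α1 + α2 := by positivity

    rw [hinv]
    rw [div_add_div _ _ (ne_of_gt hd1) (ne_of_gt hd2), le_div_iff₀ (by positivity)]
    have key : s * α1 * (t * α1 + α2) + (s * α1 + α2) * (t * α1)
        - 1 * ((s * α1 + α2) * (t * α1 + α2)) = s * t * α1 ^ 2 - α2 ^ 2 := by ring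
    have h5 : s * t * α1 ^ 2 = α1 ^ 2 := by rw [hsinv]; ring
    have h6 : α2 ^ 2 < α1 ^ 2 := by nlinarith
    linarith
  have hsumge : (k : ℝ) ≤ ∑ i : Fin k, ((lam i) ^ 2 * α1 / ((lam i) ^ 2 * α1 + α2)
      + ((lam i)⁻¹) ^ 2 * α1 / (((lam i)⁻¹) ^ 2 * α1 + α2)) := by
    calc (k : ℝ) = ∑ _i : Fin k, (1 : ℝ) := by simp
    _ ≤ _ := Finset.sum_le_sum fun i _ => hterm i
  -- α1 > (1 - 2k/N)/2
  have hk : p / (n1 + n2) = 2 * k / (n1 + n2) := by rw [hpk]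
  have hα1big : α1 > (1 - 2 * k / (n1 + n2)) / 2 := by
    rw [hk] at hsum; linarith
  have h2 : n1 / (n1 + n2) ≥ α1 + (1 / (n1 + n2)) * k := by
    rw [← heq]
    have := mul_le_mul_of_nonneg_left hsumge (le_of_lt (by positivity : (0:ℝ) < 1 / (n1 + n2)))
    linarith
  have h3 : n1 / (n1 + n2) > 1 / 2 := by
    have : α1 + (1 / (n1 + n2)) * k > 1 / 2 := by
      have h4 : (1 / (n1 + n2)) * k = k / (n1 + n2) := by ring
      rw [h4]
      have : 2 * (k : ℝ) / (n1 + n2) = 2 * ((k : ℝ) / (n1 + n2)) := by ring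
      rw [this] at hα1big
      linarith
    linarith
  rw [gt_iff_lt, div_lt_div_iff₀ (by norm_num) hN] at h3
  linarith
end

section
/- Let p be an even positive integer, σ > 0, n1, n2 > 0 with n1 + n2 > p, and let λ_1,...,λ_{p/2} > 0. Let α1, α2 > 0 satisfy α1 + α2 = 1 - p/(n1+n2). Define g = (σ²/(n1+n2)) · Σ_{i=1}^{p/2} [1/(λ_i² α1 + α2) + 1/(λ_i^{-2} α1 + α2)] and g_id = σ² p/(n1+n2-p). Then g - g_id = (σ²/(n1+n2-p)) · Σ_{i=1}^{p/2} (λ_i²-1)² α1 (α1 - α2) / ((α1 + λ_i² α2)(λ_i² α1 + α2)). In particular, if α1 ≤ α2 then g ≤ g_id, and if α1 ≥ α2 then g ≥ g_id. -/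
lemma cs_term_eq (α1 α2 L : ℝ) (h1 : 0 < α1) (h2 : 0 < α2) (hL : 0 < L) :
    (α1 + α2) * (1 / (L ^ 2 * α1 + α2) + 1 / ((L⁻¹) ^ 2 * α1 + α2)) - 2
      = (L ^ 2 - 1) ^ 2 * α1 * (α1 - α2) / ((α1 + L ^ 2 * α2) * (L ^ 2 * α1 + α2)) := by
  have hL0 : L ≠ 0 := ne_of_gt hL
  have d1 : L ^ 2 * α1 + α2 ≠ 0 := by positivity
  have d2 : (L⁻¹) ^ 2 * α1 + α2 ≠ 0 := by positivity
  have d3 : α1 + L ^ 2 * α2 ≠ 0 := by positivity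
  field_simp
  ring

/-- Algebraic identity at the heart of Proposition 3.2 (impact of covariate shift):
the difference between the variance limit g under covariate shift with reciprocal-pair
singular values and the identity-shift value g_id, together with its sign consequences. -/
theorem covariate_shift_identity
    (k : ℕ) (σ n1 n2 α1 α2 : ℝ) (lam : Fin k → ℝ)
    (hk : 0 < k) (hσ : 0 < σ) (hn1 : 0 < n1) (hn2 : 0 < n2)
    (hpn : (2 * k : ℝ) < n1 + n2)
    (hlam : ∀ i, 0 < lam i) (hα1 : 0 < α1) (hα2 : 0 < α2)
    (hsum : α1 + α2 = 1 - (2 * k : ℝ) / (n1 + n2)) :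
    (σ ^ 2 / (n1 + n2) *
        ∑ i : Fin k, (1 / ((lam i) ^ 2 * α1 + α2) + 1 / (((lam i)⁻¹) ^ 2 * α1 + α2)))
      - σ ^ 2 * (2 * k : ℝ) / (n1 + n2 - (2 * k : ℝ))
      = σ ^ 2 / (n1 + n2 - (2 * k : ℝ)) *
          ∑ i : Fin k, ((lam i) ^ 2 - 1) ^ 2 * α1 * (α1 - α2) /
            ((α1 + (lam i) ^ 2 * α2) * ((lam i) ^ 2 * α1 + α2))
    ∧ (α1 ≤ α2 →
        σ ^ 2 / (n1 + n2) *
            ∑ i : Fin k, (1 / ((lam i) ^ 2 * α1 + α2) + 1 / (((lam i)⁻¹) ^ 2 * α1 + α2))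
          ≤ σ ^ 2 * (2 * k : ℝ) / (n1 + n2 - (2 * k : ℝ)))
    ∧ (α2 ≤ α1 →
        σ ^ 2 * (2 * k : ℝ) / (n1 + n2 - (2 * k : ℝ))
          ≤ σ ^ 2 / (n1 + n2) *
              ∑ i : Fin k, (1 / ((lam i) ^ 2 * α1 + α2) + 1 / (((lam i)⁻¹) ^ 2 * α1 + α2))) := by
  have hN : (0:ℝ) < n1 + n2 := by linarith
  have hNp : (0:ℝ) < n1 + n2 - 2 * k := by linarith
  have hN0 : (n1 + n2) ≠ 0 := ne_of_gt hN
  have hNp0 : (n1 + n2 - 2 * k) ≠ 0 := ne_of_gt hNp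
  have hfrac : n1 + n2 - 2 * k = (n1 + n2) * (α1 + α2) := by
    field_simp at hsum
    linarith
  set S := ∑ i : Fin k, (1 / ((lam i) ^ 2 * α1 + α2) + 1 / (((lam i)⁻¹) ^ 2 * α1 + α2)) with hS
  set D := ∑ i : Fin k, ((lam i) ^ 2 - 1) ^ 2 * α1 * (α1 - α2) /
            ((α1 + (lam i) ^ 2 * α2) * ((lam i) ^ 2 * α1 + α2)) with hD
  have hsumD : (α1 + α2) * S - 2 * k = D := by
    have h2k : (2 * k : ℝ) = ∑ _i : Fin k, (2:ℝ) := by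
      simp [Finset.sum_const, mul_comm]
    rw [hS, hD, Finset.mul_sum, h2k, ← Finset.sum_sub_distrib]
    exact Finset.sum_congr rfl fun i _ => cs_term_eq α1 α2 (lam i) hα1 hα2 (hlam i)
  have hmain : σ ^ 2 / (n1 + n2) * S - σ ^ 2 * (2 * k : ℝ) / (n1 + n2 - 2 * k)
      = σ ^ 2 / (n1 + n2 - 2 * k) * D := by
    rw [← hsumD, hfrac]
    have hα12 : α1 + α2 ≠ 0 := by positivity
    field_simp
  refine ⟨hmain, ?_, ?_⟩
  · intro h
    have hDle : D ≤ 0 := by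
      rw [hD]
      apply Finset.sum_nonpos
      intro i _
      apply div_nonpos_of_nonpos_of_nonneg
      · have : α1 - α2 ≤ 0 := by linarith
        have hnn : 0 ≤ ((lam i) ^ 2 - 1) ^ 2 * α1 := by positivity
        exact mul_nonpos_of_nonneg_of_nonpos hnn this
      · have := hlam i
        positivity
    nlinarith [mul_nonpos_of_nonneg_of_nonpos (le_of_lt (div_pos (by positivity : (0:ℝ) < σ ^ 2) hNp)) hDle]
  · intro h
    have hDge : 0 ≤ D := by
      rw [hD]
      apply Finset.sum_nonneg
      intro i _
      apply div_nonneg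
      · have : 0 ≤ α1 - α2 := by linarith
        positivity
      · have := hlam i
        positivity
    nlinarith [mul_nonneg (le_of_lt (div_pos (by positivity : (0:ℝ) < σ ^ 2) hNp)) hDge]
end

section
/- Let c ∈ (0,1), let p be a positive integer, and let λ_1,...,λ_p be positive reals with c ≤ λ_i ≤ 1/c for all i and ∏_{i=1}^p λ_i = 1. Then for any α1, α2 > 0, Σ_{i=1}^p 1/(α1 λ_i² + α2) ≥ p/(α1 + α2/c²). -/
/-- Main inequality of Proposition 3.3 (impact of covariate shift II):
lower bound for the trace of (α1 M^T M + α2)^{-1} for determinant-one shift matrices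
with singular values in [c, 1/c]. -/
theorem trace_lower_bound
    (c : ℝ) (hc : c ∈ Set.Ioo (0 : ℝ) 1) (p : ℕ) (hp : 0 < p)
    (lam : Fin p → ℝ) (hlam : ∀ i, 0 < lam i)
    (hbd : ∀ i, c ≤ lam i ∧ lam i ≤ 1 / c)
    (hdet : ∏ i, lam i = 1)
    (α1 α2 : ℝ) (hα1 : 0 < α1) (hα2 : 0 < α2) :
    (p : ℝ) / (α1 + α2 / c ^ 2) ≤ ∑ i, 1 / (α1 * (lam i) ^ 2 + α2) := by
  obtain ⟨hc0, hc1⟩ := hc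
  have hc2 : (0:ℝ) < c ^ 2 := by positivity
  have hA : (0:ℝ) < α1 + α2 / c ^ 2 := by positivity
  -- Step 1: pointwise bound
  have key : ∀ i, (1 / (α1 + α2 / c ^ 2)) * (1 / (lam i) ^ 2)
      ≤ 1 / (α1 * (lam i) ^ 2 + α2) := by
    intro i
    have hl := hlam i
    have hlc : c ≤ lam i := (hbd i).1
    have hl2 : c ^ 2 ≤ (lam i) ^ 2 := by nlinarith
    have hden : α1 * (lam i) ^ 2 + α2 ≤ (α1 + α2 / c ^ 2) * (lam i) ^ 2 := by
      have : α2 ≤ α2 / c ^ 2 * (lam i) ^ 2 := by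
        rw [div_mul_eq_mul_div, le_div_iff₀ hc2]
        nlinarith
      nlinarith
    have hpos : (0:ℝ) < α1 * (lam i) ^ 2 + α2 := by positivity
    rw [one_div_mul_eq_div, div_div]
    exact one_div_le_one_div_of_le hpos (by linarith [hden, mul_comm (α1 + α2 / c ^ 2) ((lam i) ^ 2)])
  -- Step 2: AM-GM : ∑ 1/λ_i² ≥ p
  have hsum : (p : ℝ) ≤ ∑ i, 1 / (lam i) ^ 2 := by
    have hw : ∀ i ∈ (Finset.univ : Finset (Fin p)), (0:ℝ) ≤ (1 / (p:ℝ)) := by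
      intro i _; positivity
    have hw' : ∑ _i : Fin p, (1 / (p:ℝ)) = 1 := by
      simp [Finset.sum_const, Finset.card_univ]
      field_simp
    have hz : ∀ i ∈ (Finset.univ : Finset (Fin p)), (0:ℝ) ≤ 1 / (lam i) ^ 2 := by
      intro i _; positivity
    have := Real.geom_mean_le_arith_mean_weighted Finset.univ
      (fun _ => 1 / (p:ℝ)) (fun i => 1 / (lam i) ^ 2) hw hw' hz
    have hprod : ∏ i, (1 / (lam i) ^ 2) ^ ((1:ℝ) / p) = 1 := by
      have h1 : ∏ i, (1 / (lam i) ^ 2) = 1 := by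
        rw [Finset.prod_div_distrib, Finset.prod_pow, hdet]
        simp
      rw [Real.finset_prod_rpow _ _ (fun i _ => by positivity) _, h1, Real.one_rpow]
    rw [hprod] at this
    have : 1 ≤ (1 / (p:ℝ)) * ∑ i, 1 / (lam i) ^ 2 := by
      simpa [Finset.mul_sum] using this
    have hp' : (0:ℝ) < p := by exact_mod_cast hp
    calc (p:ℝ) = p * 1 := by ring
    _ ≤ p * ((1 / (p:ℝ)) * ∑ i, 1 / (lam i) ^ 2) := by
        exact mul_le_mul_of_nonneg_left this (le_of_lt hp')
    _ = ∑ i, 1 / (lam i) ^ 2 := by field_simp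
  calc (p : ℝ) / (α1 + α2 / c ^ 2)
      = (1 / (α1 + α2 / c ^ 2)) * p := by ring
    _ ≤ (1 / (α1 + α2 / c ^ 2)) * ∑ i, 1 / (lam i) ^ 2 :=
        mul_le_mul_of_nonneg_left hsum (by positivity)
    _ = ∑ i, (1 / (α1 + α2 / c ^ 2)) * (1 / (lam i) ^ 2) := by
        rw [Finset.mul_sum]
    _ ≤ ∑ i, 1 / (α1 * (lam i) ^ 2 + α2) :=
        Finset.sum_le_sum (fun i _ => key i)
end

section
/- Let p, n2, σ, μ be positive reals with n2 > p. If μ² ≤ σ²p/(2(n2-p)), then for every n1 > 0, 2μ²(n2-p)(n1(n1+n2-p) + p n2) ≤ σ²p(n1+n2)². -/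
/-- Case (i) of Proposition 3.5: under a small model shift, the transfer is positive
for every source sample size n1. -/
theorem model_shift_small_positive_transfer
    (p n2 σ μ : ℝ) (hp : 0 < p) (hn2 : 0 < n2) (hσ : 0 < σ) (hμ : 0 < μ)
    (hpn2 : p < n2)
    (hsmall : μ ^ 2 ≤ σ ^ 2 * p / (2 * (n2 - p))) :
    ∀ n1 : ℝ, 0 < n1 →
      2 * μ ^ 2 * (n2 - p) * (n1 * (n1 + n2 - p) + p * n2)
        ≤ σ ^ 2 * p * (n1 + n2) ^ 2 := by
  intro n1 hn1
  have hd : (0:ℝ) < n2 - p := sub_pos.mpr hpn2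
  have h : 2 * μ ^ 2 * (n2 - p) ≤ σ ^ 2 * p := by
    rw [le_div_iff₀ (by linarith)] at hsmall
    linarith
  have hA : 0 < n1 * (n1 + n2 - p) + p * n2 := by nlinarith [mul_pos hn1 hd, mul_pos hn1 hn1, mul_pos hp hn2]
  have h1 : 2 * μ ^ 2 * (n2 - p) * (n1 * (n1 + n2 - p) + p * n2)
      ≤ σ ^ 2 * p * (n1 * (n1 + n2 - p) + p * n2) :=
    mul_le_mul_of_nonneg_right h hA.le
  have h2 : n1 * (n1 + n2 - p) + p * n2 ≤ (n1 + n2) ^ 2 := by nlinarith [mul_pos hn1 hp, mul_pos hn2 hd]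
  have h3 : σ ^ 2 * p * (n1 * (n1 + n2 - p) + p * n2) ≤ σ ^ 2 * p * (n1 + n2) ^ 2 :=
    mul_le_mul_of_nonneg_left h2 (by positivity)
  linarith
end

section
/- Let p, n2, σ, μ be positive reals with n2 ≥ 3p. If μ² ≥ σ²n2/(2(n2-p)), then for every n1 ≥ 0, 2μ²(n2-p)(n1(n1+n2-p) + p n2) ≥ σ²p(n1+n2)². -/
/-- Case (iii) of Proposition 3.5: under a large model shift, the transfer is negative
for every source sample size n1 (using n2 ≥ 3p). -/
theorem model_shift_large_negative_transfer
    (p n2 σ μ : ℝ) (hp : 0 < p) (hn2 : 0 < n2) (hσ : 0 < σ) (hμ : 0 < μ)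
    (hn2p : 3 * p ≤ n2)
    (hlarge : σ ^ 2 * n2 / (2 * (n2 - p)) ≤ μ ^ 2) :
    ∀ n1 : ℝ, 0 ≤ n1 →
      σ ^ 2 * p * (n1 + n2) ^ 2
        ≤ 2 * μ ^ 2 * (n2 - p) * (n1 * (n1 + n2 - p) + p * n2) := by
  intro n1 hn1
  have hnp : 0 < n2 - p := by nlinarith
  have hA : σ ^ 2 * n2 ≤ 2 * μ ^ 2 * (n2 - p) := by
    have := (div_le_iff₀ (by linarith : (0:ℝ) < 2 * (n2 - p))).mp hlarge
    nlinarith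
  have hσ2 : 0 < σ ^ 2 := by positivity
  have hkey : σ ^ 2 * p * (n1 + n2) ^ 2 ≤ σ ^ 2 * n2 * (n1 * (n1 + n2 - p) + p * n2) := by
    nlinarith [mul_nonneg (mul_nonneg hσ2.le (sq_nonneg n1)) hnp.le,
      mul_nonneg (mul_nonneg (mul_nonneg hσ2.le hn1) hn2.le) (by linarith : (0:ℝ) ≤ n2 - 3*p)]
  have hpos : 0 ≤ n1 * (n1 + n2 - p) + p * n2 := by nlinarith
  nlinarith [mul_le_mul_of_nonneg_right hA hpos]
end

section
/- Let t > r ≥ 1 be integers and let S be a t×t real symmetric positive semidefinite matrix with eigenvalues λ_1 ≥ ... ≥ λ_t and orthonormal eigenvectors v_1,...,v_t. Let A* ∈ ℝ^{t×r} have columns v_1,...,v_r, and let U ∈ ℝ^{t×r} be any matrix with UᵀU = Id_r. Then tr[S(A*A*ᵀ - UUᵀ)] ≥ (λ_r - λ_{r+1}) · Σ_{i=r+1}^t ‖Uᵀv_i‖². -/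
/-!
Write `c i = ‖Uᵀ v i‖²`. Expanding `S` in its eigenbasis gives `tr[S A*A*ᵀ] = ∑_{i<r} λ i` and
`tr[S UUᵀ] = ∑ λ i c i`. Since `U` has orthonormal columns, `0 ≤ c i ≤ 1` (Bessel) and
`∑ c i = tr[UᵀU] = r` (Parseval), so the deficit `∑_{i<r} (1 - c i)` equals the bottom energy
`∑_{i≥r} c i`. The gap `∑_{i<r} λ i (1 - c i) - ∑_{i≥r} λ i c i` is then at least
`(λ (r-1) - λ r) ∑_{i≥r} c i` because `λ` is antitone.
-/

open Matrix Finset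

namespace Matrix

variable {ι n m : Type*} [Fintype n] [Fintype m]

theorem trace_vecMulVec_self_mul_mul_transpose (a : n → ℝ) (P : Matrix n m ℝ) :
    trace (vecMulVec a a * (P * Pᵀ)) = (Pᵀ *ᵥ a) ⬝ᵥ (Pᵀ *ᵥ a) := by
  rw [vecMulVec_mul, trace_vecMulVec, ← vecMul_vecMul, vecMul_transpose, dotProduct_mulVec,
    ← mulVec_transpose]

theorem trace_sum_smul_vecMulVec_mul_mul_transpose [Fintype ι] (lam : ι → ℝ) (v : ι → n → ℝ)
    (P : Matrix n m ℝ) :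
    trace ((∑ i, lam i • vecMulVec (v i) (v i)) * (P * Pᵀ)) =
      ∑ i, lam i * (Pᵀ *ᵥ v i) ⬝ᵥ (Pᵀ *ᵥ v i) := by
  simp only [Finset.sum_mul, trace_sum, smul_mul, trace_smul,
    trace_vecMulVec_self_mul_mul_transpose, smul_eq_mul]

theorem sum_vecMulVec_self_eq_one [DecidableEq n] {v : n → n → ℝ}
    (hortho : ∀ i j, v i ⬝ᵥ v j = if i = j then 1 else 0) :
    ∑ i, vecMulVec (v i) (v i) = 1 := by
  have hrows : of v * (of v)ᵀ = 1 := by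
    ext i j
    simpa [mul_apply, one_apply, dotProduct] using hortho i j
  rw [← mul_eq_one_comm.mp hrows]
  ext j k
  simp [mul_apply, vecMulVec_apply, Matrix.sum_apply]

theorem sum_dotProduct_transpose_mulVec_self [DecidableEq n] {v : n → n → ℝ}
    (hortho : ∀ i j, v i ⬝ᵥ v j = if i = j then 1 else 0) (P : Matrix n m ℝ) :
    ∑ i, (Pᵀ *ᵥ v i) ⬝ᵥ (Pᵀ *ᵥ v i) = trace (Pᵀ * P) := by
  have := trace_sum_smul_vecMulVec_mul_mul_transpose 1 v P
  simp only [Pi.one_apply, one_smul, one_mul, sum_vecMulVec_self_eq_one hortho] at this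
  rw [← this, trace_mul_comm]

theorem dotProduct_transpose_mulVec_self_le [DecidableEq m] {U : Matrix n m ℝ} (hU : Uᵀ * U = 1)
    (x : n → ℝ) :
    (Uᵀ *ᵥ x) ⬝ᵥ (Uᵀ *ᵥ x) ≤ x ⬝ᵥ x := by
  set w := Uᵀ *ᵥ x
  have hxUw : x ⬝ᵥ U *ᵥ w = w ⬝ᵥ w := by
    rw [dotProduct_mulVec, ← mulVec_transpose]
  have hUwUw : U *ᵥ w ⬝ᵥ U *ᵥ w = w ⬝ᵥ w := by
    rw [dotProduct_mulVec, ← mulVec_transpose, mulVec_mulVec, hU, one_mulVec]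
  have hnonneg : 0 ≤ (x - U *ᵥ w) ⬝ᵥ (x - U *ᵥ w) := by
    simpa using dotProduct_self_star_nonneg (x - U *ᵥ w)
  rw [sub_dotProduct, dotProduct_sub, dotProduct_sub, dotProduct_comm (U *ᵥ w) x, hxUw,
    hUwUw] at hnonneg
  linarith

theorem dotProduct_transpose_mulVec_self_of_orthonormal [DecidableEq ι] {v : ι → n → ℝ}
    (hortho : ∀ i j, v i ⬝ᵥ v j = if i = j then 1 else 0) {σ : m → ι} (hσ : σ.Injective)
    {A : Matrix n m ℝ} (hA : ∀ j k, A j k = v (σ k) j) (i : ι) :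
    (Aᵀ *ᵥ v i) ⬝ᵥ (Aᵀ *ᵥ v i) = if i ∈ Set.range σ then 1 else 0 := by
  classical
  have hcoord : Aᵀ *ᵥ v i = fun k => if σ k = i then 1 else 0 := by
    ext k
    rw [← hortho]
    simp [mulVec, dotProduct, hA]
  rw [hcoord]
  split_ifs with hi
  · obtain ⟨k₀, rfl⟩ := hi
    simp [dotProduct, hσ.eq_iff]
  · have hσi : ∀ k, σ k ≠ i := fun k h => hi ⟨k, h⟩
    simp [dotProduct, hσi]

end Matrix

theorem mul_sum_compl_le_sum_sub_sum_mul {ι : Type*} [Fintype ι] [DecidableEq ι] (s : Finset ι)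
    {lam c : ι → ℝ} {a b : ℝ} (ha : ∀ i ∈ s, a ≤ lam i) (hb : ∀ i ∉ s, lam i ≤ b)
    (hc₀ : ∀ i, 0 ≤ c i) (hc₁ : ∀ i, c i ≤ 1) (hc : ∑ i, c i = #s) :
    (a - b) * ∑ i ∈ sᶜ, c i ≤ ∑ i ∈ s, lam i - ∑ i, lam i * c i := by
  have hdeficit : ∑ i ∈ s, (1 - c i) = ∑ i ∈ sᶜ, c i := by
    rw [sum_sub_distrib, sum_const, nsmul_one, ← hc, ← sum_add_sum_compl s c]
    ring
  have hs : a * ∑ i ∈ sᶜ, c i ≤ ∑ i ∈ s, lam i * (1 - c i) := by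
    rw [← hdeficit, mul_sum]
    exact sum_le_sum fun i hi => mul_le_mul_of_nonneg_right (ha i hi) (sub_nonneg.2 (hc₁ i))
  have hsc : ∑ i ∈ sᶜ, lam i * c i ≤ b * ∑ i ∈ sᶜ, c i := by
    rw [mul_sum]
    exact sum_le_sum fun i hi => mul_le_mul_of_nonneg_right (hb i (mem_compl.1 hi)) (hc₀ i)
  have hsplit : ∑ i ∈ s, lam i - ∑ i, lam i * c i =
      ∑ i ∈ s, lam i * (1 - c i) - ∑ i ∈ sᶜ, lam i * c i := by
    rw [← sum_add_sum_compl s (fun i => lam i * c i)]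
    simp only [mul_sub, mul_one, sum_sub_distrib]
    ring
  rw [hsplit, sub_mul]
  linarith

/-- Key spectral inequality from the proof of Lemma E.2: the PCA suboptimality gap of a
rank-r projector UUᵀ relative to the top-r eigenprojector A*A*ᵀ controls the energy of U
in the bottom eigenspace. -/
theorem pca_suboptimality_gap
    (t r : ℕ) (hrt : r < t)
    (S : Matrix (Fin t) (Fin t) ℝ) (lam : Fin t → ℝ) (v : Fin t → Fin t → ℝ)
    (hortho : ∀ i j, dotProduct (v i) (v j) = if i = j then 1 else 0)
    (hdecomp : S = ∑ i, lam i • Matrix.vecMulVec (v i) (v i))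
    (hsorted : Antitone lam)
    (U : Matrix (Fin t) (Fin r) ℝ) (hU : Uᵀ * U = 1)
    (Astar : Matrix (Fin t) (Fin r) ℝ)
    (hAstar : ∀ (i : Fin t) (k : Fin r), Astar i k = v (Fin.castLE hrt.le k) i) :
    (lam ⟨r - 1, by omega⟩ - lam ⟨r, hrt⟩) *
        ∑ i ∈ Finset.univ.filter (fun i : Fin t => r ≤ (i : ℕ)),
          dotProduct (Uᵀ.mulVec (v i)) (Uᵀ.mulVec (v i))
      ≤ Matrix.trace (S * (Astar * Astarᵀ - U * Uᵀ)) := by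
  set s : Finset (Fin t) := univ.filter (fun i => (i : ℕ) < r)
  have hA : ∀ i, (Astarᵀ *ᵥ v i) ⬝ᵥ (Astarᵀ *ᵥ v i) = if (i : ℕ) < r then 1 else 0 := fun i => by
    simp only [dotProduct_transpose_mulVec_self_of_orthonormal hortho
      (Fin.castLE_injective hrt.le) hAstar, Fin.range_castLE, Set.mem_ofPred_eq]
  have htrace : trace (S * (Astar * Astarᵀ - U * Uᵀ)) =
      ∑ i ∈ s, lam i - ∑ i, lam i * (Uᵀ *ᵥ v i) ⬝ᵥ (Uᵀ *ᵥ v i) := by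
    rw [mul_sub, trace_sub, hdecomp, trace_sum_smul_vecMulVec_mul_mul_transpose,
      trace_sum_smul_vecMulVec_mul_mul_transpose, sum_filter]
    simp only [hA, mul_ite, mul_one, mul_zero]
  have hcard : ∑ i, (Uᵀ *ᵥ v i) ⬝ᵥ (Uᵀ *ᵥ v i) = #s := by
    rw [sum_dotProduct_transpose_mulVec_self hortho, hU, trace_one, Fintype.card_fin,
      Fin.card_filter_val_lt, min_eq_right hrt.le]
  have hcompl : sᶜ = univ.filter (fun i : Fin t => r ≤ (i : ℕ)) := by
    simp only [s, compl_filter, not_lt]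
  rw [htrace, ← hcompl]
  refine mul_sum_compl_le_sum_sub_sum_mul s (fun i hi => hsorted ?_) (fun i hi => hsorted ?_)
    (fun i => ?_) (fun i => ?_) hcard
  · simp only [s, mem_filter, mem_univ, true_and] at hi
    show (i : ℕ) ≤ r - 1
    omega
  · simp only [s, mem_filter, mem_univ, true_and, not_lt] at hi
    exact Fin.le_def.2 hi
  · simpa using dotProduct_self_star_nonneg (Uᵀ *ᵥ v i)
  · simpa [hortho] using dotProduct_transpose_mulVec_self_le hU (v i)
end
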